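/- arXiv:2403.13584 — 4 statements merged into one kernel-verified Lean document; each statement's English description precedes it below -/
import Mathlib

section
/- Let σ be a positive semidefinite operator on a finite-dimensional complex Hilbert space, let α ∈ (1,∞) with conjugate index α' = α/(α−1), and let X, Y be positive semidefinite operators. Then ⟨X, Y⟩_σ ≤ ‖X‖_{α,σ} · ‖Y‖_{α',σ}. -/
open Matrix
open scoped ComplexOrder Kronecker

noncomputable section

/-- Real power of a Hermitian matrix via functional calculus on its support
(Moore–Penrose convention, also for negative powers); junk value `0` for
non-Hermitian input. -/
def Matrix.rpowH {ι : Type*} [Fintype ι] [DecidableEq ι] (A : Matrix ι ι ℂ) (p : ℝ) :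
    Matrix ι ι ℂ :=
  if hA : A.IsHermitian then
    (hA.eigenvectorUnitary : Matrix ι ι ℂ) *
      Matrix.diagonal (fun i => ((hA.eigenvalues i ^ p : ℝ) : ℂ)) *
      star (hA.eigenvectorUnitary : Matrix ι ι ℂ)
  else 0

/-- The operator absolute value `|A| = (A† A)^(1/2)`. -/
def Matrix.absM {ι : Type*} [Fintype ι] [DecidableEq ι] (A : Matrix ι ι ℂ) :
    Matrix ι ι ℂ :=
  Matrix.rpowH (Aᴴ * A) (2⁻¹ : ℝ)

/-- Real part of the trace. -/
def retr {ι : Type*} [Fintype ι] (A : Matrix ι ι ℂ) : ℝ :=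
  (Matrix.trace A).re

/-- The σ-weighted `p`-(quasi)norm `‖X‖_{p,σ} = (Tr[|σ^{1/(2p)} X σ^{1/(2p)}|^p])^{1/p}`. -/
def wNorm {ι : Type*} [Fintype ι] [DecidableEq ι]
    (p : ℝ) (σ X : Matrix ι ι ℂ) : ℝ :=
  (retr (Matrix.rpowH
    (Matrix.absM (Matrix.rpowH σ (1 / (2 * p)) * X * Matrix.rpowH σ (1 / (2 * p)))) p))
    ^ (1 / p)

/-- The Kubo–Martin–Schwinger σ-weighted inner product
`⟨X, Y⟩_σ = Tr[X† σ^{1/2} Y σ^{1/2}]` (its real part; it is real for the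
operators considered here). -/
def kmsInner {ι : Type*} [Fintype ι] [DecidableEq ι]
    (σ X Y : Matrix ι ι ℂ) : ℝ :=
  retr (Xᴴ * Matrix.rpowH σ (2⁻¹ : ℝ) * Y * Matrix.rpowH σ (2⁻¹ : ℝ))

/-! With `M = σ^{1/(2α)} X σ^{1/(2α)}` and `N = σ^{1/(2α')} Y σ^{1/(2α')}`, the exponents add up
to `1/2`, so cyclicity of the trace turns `⟨X, Y⟩_σ` into `Tr[M N]`, while the two weighted norms
are the Schatten norms of the positive matrices `M` and `N`. Diagonalising `M = ∑ λᵢ uᵢuᵢ†` and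
`N = ∑ μⱼ vⱼvⱼ†` gives `Tr[M N] = ∑ λᵢ μⱼ |⟨uᵢ, vⱼ⟩|²`, and the weights `|⟨uᵢ, vⱼ⟩|²` form a doubly
stochastic matrix. Hölder's inequality over the pairs `(i, j)`, with each weight split as
`c^{1/α} c^{1/α'}`, then bounds the sum by `(∑ λᵢ^α)^{1/α} (∑ μⱼ^α')^{1/α'}`. -/

section

variable {ι : Type*} [Fintype ι] [DecidableEq ι]

namespace Matrix

lemma IsHermitian.rpowH_eq_cfc {A : Matrix ι ι ℂ} (hA : A.IsHermitian) (p : ℝ) :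
    A.rpowH p = cfc (· ^ p : ℝ → ℝ) A := by
  rw [hA.cfc_eq, IsHermitian.cfc, Unitary.conjStarAlgAut_apply, rpowH, dif_pos hA]
  rfl

lemma PosSemidef.nonneg_of_mem_spectrum {A : Matrix ι ι ℂ} (hA : A.PosSemidef) {x : ℝ}
    (hx : x ∈ spectrum ℝ A) : 0 ≤ x := by
  obtain ⟨i, rfl⟩ := hA.1.spectrum_real_eq_range_eigenvalues ▸ hx
  exact hA.eigenvalues_nonneg i

open scoped MatrixOrder in
lemma PosSemidef.rpowH {A : Matrix ι ι ℂ} (hA : A.PosSemidef) (p : ℝ) :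
    (A.rpowH p).PosSemidef := by
  rw [hA.1.rpowH_eq_cfc, ← nonneg_iff_posSemidef]
  exact cfc_nonneg fun x hx => Real.rpow_nonneg (hA.nonneg_of_mem_spectrum hx) p

lemma PosSemidef.rpowH_mul_rpowH {A : Matrix ι ι ℂ} (hA : A.PosSemidef) {a b : ℝ}
    (hab : a + b ≠ 0) : A.rpowH a * A.rpowH b = A.rpowH (a + b) := by
  rw [hA.1.rpowH_eq_cfc, hA.1.rpowH_eq_cfc, hA.1.rpowH_eq_cfc, ← cfc_mul _ _ _
    (A.finite_real_spectrum.continuousOn _) (A.finite_real_spectrum.continuousOn _)]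
  exact cfc_congr fun x hx => (Real.rpow_add' (hA.nonneg_of_mem_spectrum hx) hab).symm

lemma PosSemidef.absM_eq_self {A : Matrix ι ι ℂ} (hA : A.PosSemidef) : A.absM = A := by
  have hsq : Aᴴ * A = cfc (· ^ 2 : ℝ → ℝ) A := by
    rw [hA.1.eq, cfc_pow_id A 2 hA.1.isSelfAdjoint, sq]
  have hsqH : (cfc (· ^ 2 : ℝ → ℝ) A).IsHermitian := cfc_predicate _ A
  rw [absM, hsq, hsqH.rpowH_eq_cfc, ← cfc_comp _ _ A hA.1.isSelfAdjoint]
  conv_rhs => rw [← cfc_id ℝ A hA.1.isSelfAdjoint]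
  refine cfc_congr fun x hx => ?_
  rw [Function.comp_apply, ← one_div, ← Real.sqrt_eq_rpow,
    Real.sqrt_sq (hA.nonneg_of_mem_spectrum hx), id]

lemma PosSemidef.rpowH_mul_mul_rpowH {σ X : Matrix ι ι ℂ} (hX : X.PosSemidef)
    (hσ : σ.PosSemidef) (p : ℝ) : (σ.rpowH p * X * σ.rpowH p).PosSemidef := by
  simpa only [(hσ.rpowH p).1.eq] using hX.mul_mul_conjTranspose_same (σ.rpowH p)

lemma IsHermitian.retr_rpowH {A : Matrix ι ι ℂ} (hA : A.IsHermitian) (p : ℝ) :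
    retr (A.rpowH p) = ∑ i, hA.eigenvalues i ^ p := by
  rw [rpowH, dif_pos hA, retr, trace_mul_cycle, Unitary.coe_star_mul_self, one_mul,
    trace_diagonal, Complex.re_sum]
  simp

lemma trace_diagonal_mul_diagonal_mul_conjTranspose (d e : ι → ℝ) (W : Matrix ι ι ℂ) :
    trace (diagonal (fun i => (d i : ℂ)) * W * diagonal (fun j => (e j : ℂ)) * Wᴴ)
      = ∑ i, ∑ j, ((d i * e j * Complex.normSq (W i j) : ℝ) : ℂ) := by
  have hDWE : ∀ i j, (diagonal (fun i => (d i : ℂ)) * W * diagonal (fun j => (e j : ℂ))) i j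
      = d i * W i j * e j := by simp [mul_diagonal, diagonal_mul]
  refine Finset.sum_congr rfl fun i _ => ?_
  rw [diag_apply, mul_apply]
  refine Finset.sum_congr rfl fun j _ => ?_
  rw [hDWE, conjTranspose_apply, Complex.ofReal_mul, Complex.ofReal_mul,
    Complex.normSq_eq_conj_mul_self, Complex.star_def]
  ring

lemma IsHermitian.retr_mul {M N : Matrix ι ι ℂ} (hM : M.IsHermitian) (hN : N.IsHermitian) :
    retr (M * N) = ∑ i, ∑ j, hM.eigenvalues i * hN.eigenvalues j *
      Complex.normSq ((star (hM.eigenvectorUnitary : Matrix ι ι ℂ) *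
        hN.eigenvectorUnitary) i j) := by
  set U := (hM.eigenvectorUnitary : Matrix ι ι ℂ)
  set V := (hN.eigenvectorUnitary : Matrix ι ι ℂ)
  have hMN : M * N = U * (diagonal (fun i => (hM.eigenvalues i : ℂ)) * (star U * V) *
      diagonal (fun j => (hN.eigenvalues j : ℂ)) * star V) := by
    conv_lhs => rw [hM.spectral_theorem, hN.spectral_theorem]
    simp only [Unitary.conjStarAlgAut_apply, mul_assoc]
    rfl
  have hVU : star V * U = (star U * V)ᴴ := by rw [← star_eq_conjTranspose, star_mul, star_star]
  rw [retr, hMN, trace_mul_comm, mul_assoc, hVU, trace_diagonal_mul_diagonal_mul_conjTranspose]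
  simp_rw [← Complex.ofReal_sum, Complex.ofReal_re]

lemma sum_normSq_row_of_mem_unitaryGroup {W : Matrix ι ι ℂ} (hW : W ∈ unitaryGroup ι ℂ)
    (i : ι) : ∑ j, Complex.normSq (W i j) = 1 := by
  have h := congr_fun (congr_fun (mem_unitaryGroup_iff.1 hW) i) i
  rw [mul_apply, one_apply_eq] at h
  have : ((∑ j, Complex.normSq (W i j) : ℝ) : ℂ) = 1 := by
    simpa [Complex.mul_conj] using h
  exact_mod_cast this

lemma normSq_mem_doublyStochastic {W : Matrix ι ι ℂ} (hW : W ∈ unitaryGroup ι ℂ) :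
    of (fun i j => Complex.normSq (W i j)) ∈ doublyStochastic ℝ ι := by
  refine mem_doublyStochastic_iff_sum.2 ⟨fun i j => Complex.normSq_nonneg _,
    sum_normSq_row_of_mem_unitaryGroup hW, fun j => ?_⟩
  simpa using sum_normSq_row_of_mem_unitaryGroup (Unitary.star_mem hW) j

end Matrix

lemma Real.inner_le_Lp_mul_Lq_of_mem_doublyStochastic {d e : ι → ℝ} {c : Matrix ι ι ℝ}
    (hd : ∀ i, 0 ≤ d i) (he : ∀ j, 0 ≤ e j) (hc : c ∈ doublyStochastic ℝ ι) {p q : ℝ}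
    (hpq : p.HolderConjugate q) :
    ∑ i, ∑ j, d i * e j * c i j ≤ (∑ i, d i ^ p) ^ (1 / p) * (∑ j, e j ^ q) ^ (1 / q) := by
  have hc0 : ∀ i j, 0 ≤ c i j := fun i j => nonneg_of_mem_doublyStochastic hc
  have hpow : ∀ {r : ℝ}, r ≠ 0 → ∀ {x : ℝ}, 0 ≤ x → ∀ i j,
      (c i j ^ r⁻¹ * x) ^ r = c i j * x ^ r := fun hr x hx i j => by
    rw [Real.mul_rpow (Real.rpow_nonneg (hc0 i j) _) hx, Real.rpow_inv_rpow (hc0 i j) hr]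
  have key := inner_le_Lp_mul_Lq_of_nonneg (s := (Finset.univ : Finset (ι × ι))) hpq
    (f := fun x => c x.1 x.2 ^ p⁻¹ * d x.1) (g := fun x => c x.1 x.2 ^ q⁻¹ * e x.2)
    (fun x _ => mul_nonneg (Real.rpow_nonneg (hc0 _ _) _) (hd _))
    (fun x _ => mul_nonneg (Real.rpow_nonneg (hc0 _ _) _) (he _))
  simp only [Fintype.sum_prod_type, hpow hpq.ne_zero (hd _), hpow hpq.symm.ne_zero (he _)] at key
  convert key using 3 with i _ j _
  · rw [mul_mul_mul_comm, ← Real.rpow_add' (hc0 i j) (by rw [hpq.inv_add_inv_eq_one]; norm_num),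
      hpq.inv_add_inv_eq_one, Real.rpow_one]
    ring
  · simp_rw [← Finset.sum_mul, sum_row_of_mem_doublyStochastic hc, one_mul]
  · rw [Finset.sum_comm]
    simp_rw [← Finset.sum_mul, sum_col_of_mem_doublyStochastic hc, one_mul]

lemma kmsInner_eq_retr_mul {σ X Y : Matrix ι ι ℂ} (hσ : σ.PosSemidef) (hX : X.IsHermitian)
    {a b : ℝ} (hab : a + b = 2⁻¹) :
    kmsInner σ X Y = retr ((σ.rpowH a * X * σ.rpowH a) * (σ.rpowH b * Y * σ.rpowH b)) := by
  have hab' : a + b ≠ 0 := by rw [hab]; norm_num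
  have hAB : σ.rpowH 2⁻¹ = σ.rpowH a * σ.rpowH b := by rw [hσ.rpowH_mul_rpowH hab', hab]
  have hBA : σ.rpowH 2⁻¹ = σ.rpowH b * σ.rpowH a := by
    rw [hσ.rpowH_mul_rpowH (by rwa [add_comm]), add_comm, hab]
  rw [kmsInner, hX.eq, retr, retr]
  nth_rw 1 [hAB]
  rw [hBA]
  conv_rhs => rw [mul_assoc, mul_assoc, trace_mul_comm]
  simp only [mul_assoc]

lemma wNorm_eq_of_posSemidef {p : ℝ} {σ X : Matrix ι ι ℂ}
    (h : (σ.rpowH (1 / (2 * p)) * X * σ.rpowH (1 / (2 * p))).PosSemidef) :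
    wNorm p σ X = (∑ i, h.1.eigenvalues i ^ p) ^ (1 / p) := by
  rw [wNorm, h.absM_eq_self, h.1.retr_rpowH]

end

/-- weighted Hölder inequality, `α > 1`.
For a positive semidefinite `σ`, `α ∈ (1,∞)` with conjugate index `α' = α/(α-1)`,
and positive semidefinite `X, Y`: `⟨X, Y⟩_σ ≤ ‖X‖_{α,σ} ‖Y‖_{α',σ}`. -/
theorem weighted_holder
    {ι : Type*} [Fintype ι] [DecidableEq ι]
    (σ X Y : Matrix ι ι ℂ)
    (hσ : σ.PosSemidef) (hX : X.PosSemidef) (hY : Y.PosSemidef)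
    (α : ℝ) (hα : 1 < α) (α' : ℝ) (hα' : α' = α / (α - 1)) :
    kmsInner σ X Y ≤ wNorm α σ X * wNorm α' σ Y := by
  have hpq : α.HolderConjugate α' := (Real.holderConjugate_iff_eq_conjExponent hα).2 hα'
  have hM := hX.rpowH_mul_mul_rpowH hσ (1 / (2 * α))
  have hN := hY.rpowH_mul_mul_rpowH hσ (1 / (2 * α'))
  have hexp : 1 / (2 * α) + 1 / (2 * α') = 2⁻¹ := by
    rw [one_div, one_div, mul_inv, mul_inv, ← mul_add, hpq.inv_add_inv_eq_one, mul_one]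
  rw [kmsInner_eq_retr_mul hσ hX.1 hexp, hM.1.retr_mul hN.1, wNorm_eq_of_posSemidef hM,
    wNorm_eq_of_posSemidef hN]
  exact Real.inner_le_Lp_mul_Lq_of_mem_doublyStochastic hM.eigenvalues_nonneg
    hN.eigenvalues_nonneg
    (normSq_mem_doublyStochastic (star hM.1.eigenvectorUnitary * hN.1.eigenvectorUnitary).2) hpq

end
end

section
/- Let 𝒩 : x ↦ ρ_B^x be a classical-quantum channel from a finite alphabet 𝖷 to density operators on a finite-dimensional Hilbert space ℋ_B, let p_𝖷 be a probability distribution on 𝖷, and let |𝖬| ≥ 1 be the number of equiprobable messages. For any encoder 𝓔 : 𝖬 → 𝖷 and any family of decoding POVMs (one POVM (T_B^{x(m)})_{m∈𝖬} for each realization of the shared randomness), the average success probability P := (1/|𝖬|) Σ_{m∈𝖬} 𝔼_{x(m)∼p_𝖷} Tr[ρ_B^{x(m)} T_B^{x(m)}] satisfies, for every α > 1, P ≤ exp( −((α−1)/α)( log|𝖬| − I_α^𝕄(𝖷:𝖡)_ρ ) ), where ρ_{𝖷𝖡} := Σ_x p_𝖷(x) |x⟩⟨x|_𝖷 ⊗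 ρ_B^x and I_α^𝕄(𝖷:𝖡)_ρ := inf over density operators σ_B on ℋ_B of D_α^𝕄(ρ_{𝖷𝖡} ‖ ρ_𝖷 ⊗ σ_B). -/
open Matrix
open scoped ComplexOrder Kronecker

noncomputable section

open scoped Classical in
/-- Classical Rényi divergence of order `α` of two (finitely supported) probability
mass functions, with value `+∞` when `α > 1` and absolute continuity fails. -/
def renyiDivE (α : ℝ) {k : ℕ} (p q : Fin k → ℝ) : EReal :=
  if α < 1 ∨ ∀ i, q i = 0 → p i = 0 then
    (((α - 1)⁻¹ * Real.log (∑ i, p i ^ α * q i ^ (1 - α)) : ℝ) : EReal)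
  else (⊤ : EReal)

/-- Measured Rényi divergence: supremum of classical Rényi divergences of the outcome
distributions over all finite POVMs. -/
def measuredRenyiDiv {ι : Type*} [Fintype ι] [DecidableEq ι]
    (α : ℝ) (ρ σ : Matrix ι ι ℂ) : EReal :=
  ⨆ (k : ℕ) (P : Fin k → Matrix ι ι ℂ) (_ : ∀ i, (P i).PosSemidef) (_ : ∑ i, P i = 1),
    renyiDivE α (fun i => retr (ρ * P i)) (fun i => retr (σ * P i))

/-!
The decoder is turned into one binary test on `X × ι`, block diagonal with blocks
`Q x = (M p(x))⁻¹ ∑ₘ ∑_{c m = x} p(c) D c m` with `p(c) = ∏ⱼ p(c j)`: the decoding operators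
averaged over the codebooks whose `m`-th codeword is `x`. Since the `D c m` lie between `0` and `1` and the weights of
`Q x` add up to `M p(x)`, `{Q, 1 - Q}` is a measurement. It accepts `ρ_{XB}` with probability
exactly `P`, and, because `∑ₓ p(x) Q x = 1/M`, it accepts `ρ_X ⊗ σ` with probability `1/M` for
every state `σ`. The measured Rényi divergence dominates the classical one of this two-outcome
measurement, which is at least `(α - 1)⁻¹ log (P^α M^(α-1))`; rearranged, this is the bound.
-/

namespace Matrix

section CqOperator

variable {X ι R : Type*} [Fintype X] [DecidableEq X]

def cqOperator [NonAssocSemiring R] (A : X → Matrix ι ι R) : Matrix (X × ι) (X × ι) R :=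
  ∑ x, single x x 1 ⊗ₖ A x

lemma cqOperator_apply [NonAssocSemiring R] (A : X → Matrix ι ι R) (x y : X) (i j : ι) :
    cqOperator A (x, i) (y, j) = if x = y then A x i j else 0 := by
  rcases eq_or_ne x y with rfl | h
  · simp [cqOperator, sum_apply, single_apply]
  · simp only [cqOperator, sum_apply, kroneckerMap_apply, single_apply, if_neg h]
    exact Finset.sum_eq_zero fun c _ => by
      rw [if_neg fun hc => h (hc.1.symm.trans hc.2), zero_mul]

lemma diagonal_kronecker_eq_cqOperator [CommRing R] (d : X → R) (B : Matrix ι ι R) :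
    diagonal d ⊗ₖ B = cqOperator fun x => d x • B := by
  ext ⟨x, i⟩ ⟨y, j⟩
  simp [cqOperator_apply, diagonal_apply]

lemma one_sub_cqOperator [DecidableEq ι] [Ring R] (A : X → Matrix ι ι R) :
    1 - cqOperator A = cqOperator fun x => 1 - A x := by
  ext ⟨x, i⟩ ⟨y, j⟩
  simp only [sub_apply, one_apply, cqOperator_apply, Prod.mk.injEq]
  split_ifs <;> simp_all

lemma trace_cqOperator_mul_cqOperator [Fintype ι] [CommRing R] (A B : X → Matrix ι ι R) :
    (cqOperator A * cqOperator B).trace = ∑ x, (A x * B x).trace := by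
  simp [trace, mul_apply, cqOperator_apply, Fintype.sum_prod_type]

lemma PosSemidef.cqOperator [Fintype ι] {𝕜 : Type*} [RCLike 𝕜] {A : X → Matrix ι ι 𝕜}
    (hA : ∀ x, (A x).PosSemidef) : (cqOperator A).PosSemidef :=
  posSemidef_sum _ fun x _ => PosSemidef.kronecker
    (by rw [← diagonal_single]; exact .diagonal (Pi.single_nonneg.2 zero_le_one)) (hA x)

end CqOperator

lemma PosSemidef.one_sub_of_sum_eq_one {κ n 𝕜 : Type*} [Fintype κ] [DecidableEq κ]
    [DecidableEq n] [RCLike 𝕜] {E : κ → Matrix n n 𝕜} (hE : ∀ k, (E k).PosSemidef)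
    (hsum : ∑ k, E k = 1) (k : κ) : (1 - E k).PosSemidef := by
  rw [← hsum, ← Finset.add_sum_erase _ _ (Finset.mem_univ k), add_sub_cancel_left]
  exact posSemidef_sum _ fun j _ => hE j

end Matrix

lemma retr_mul_nonneg {ι : Type*} [Fintype ι] [DecidableEq ι] {A B : Matrix ι ι ℂ}
    (hA : A.PosSemidef) (hB : B.PosSemidef) : 0 ≤ retr (A * B) := by
  open scoped MatrixOrder in
  obtain ⟨C, rfl⟩ := CStarAlgebra.nonneg_iff_eq_star_mul_self.mp hB.nonneg
  rw [retr, star_eq_conjTranspose, ← Matrix.mul_assoc, trace_mul_comm, ← Matrix.mul_assoc]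
  exact (RCLike.nonneg_iff.mp (hA.mul_mul_conjTranspose_same C).trace_nonneg).1

lemma log_rpow_mul_rpow_le_renyiDivE {α : ℝ} (hα : 1 < α) {k : ℕ} {p q : Fin k → ℝ}
    (hp : ∀ i, 0 ≤ p i) (hq : ∀ i, 0 ≤ q i) (i : Fin k) (hpi : 0 < p i) :
    (((α - 1)⁻¹ * Real.log (p i ^ α * q i ^ (1 - α)) : ℝ) : EReal) ≤ renyiDivE α p q := by
  unfold renyiDivE
  split_ifs with h
  · have hqi : 0 < q i :=
      (hq i).lt_of_ne fun h0 => hpi.ne' (h.resolve_left hα.not_gt i h0.symm)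
    have hterm : p i ^ α * q i ^ (1 - α) ≤ ∑ j, p j ^ α * q j ^ (1 - α) :=
      Finset.single_le_sum (f := fun j => p j ^ α * q j ^ (1 - α))
        (fun j _ => mul_nonneg (Real.rpow_nonneg (hp j) _) (Real.rpow_nonneg (hq j) _))
        (Finset.mem_univ i)
    exact EReal.coe_le_coe_iff.2 <| mul_le_mul_of_nonneg_left
      (Real.log_le_log (by positivity) hterm) (inv_nonneg.2 (by linarith))
  · exact le_top

lemma log_rpow_mul_rpow_le_measuredRenyiDiv {ι : Type*} [Fintype ι] [DecidableEq ι] {α : ℝ}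
    (hα : 1 < α) {ρ σ Q : Matrix ι ι ℂ} (hρ : ρ.PosSemidef) (hσ : σ.PosSemidef)
    (hQ : Q.PosSemidef) (hQ1 : (1 - Q).PosSemidef) (hρQ : 0 < retr (ρ * Q)) :
    (((α - 1)⁻¹ * Real.log (retr (ρ * Q) ^ α * retr (σ * Q) ^ (1 - α)) : ℝ) : EReal) ≤
      measuredRenyiDiv α ρ σ := by
  have hE : ∀ i, (![Q, 1 - Q] i).PosSemidef := Fin.forall_fin_two.2 ⟨hQ, hQ1⟩
  refine le_iSup_of_le 2 <| le_iSup_of_le ![Q, 1 - Q] <| le_iSup_of_le hE <|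
    le_iSup_of_le (by simp) ?_
  exact log_rpow_mul_rpow_le_renyiDivE hα (fun i => retr_mul_nonneg hρ (hE i))
    (fun i => retr_mul_nonneg hσ (hE i)) 0 hρQ

lemma ofReal_le_exp_of_log_rpow_mul_rpow_le {α a N : ℝ} {D : EReal} (hα : 1 < α)
    (ha : 0 < a) (hN : 0 < N)
    (hD : (((α - 1)⁻¹ * Real.log (a ^ α * N⁻¹ ^ (1 - α)) : ℝ) : EReal) ≤ D) :
    ENNReal.ofReal a ≤
      EReal.exp (-((((α - 1) / α : ℝ) : EReal) * ((Real.log N : EReal) - D))) := by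
  set r := (α - 1)⁻¹ * Real.log (a ^ α * N⁻¹ ^ (1 - α)) with hr_def
  have hr : -((α - 1) / α * (Real.log N - r)) = Real.log a := by
    have : α - 1 ≠ 0 := by linarith
    have : α ≠ 0 := by linarith
    rw [hr_def, Real.log_mul (by positivity) (by positivity), Real.log_rpow ha,
      Real.log_rpow (by positivity), Real.log_inv]
    field_simp
    ring
  calc ENNReal.ofReal a
      = EReal.exp (-((((α - 1) / α : ℝ) : EReal) * ((Real.log N : EReal) - r))) := by
        rw [← EReal.coe_sub, ← EReal.coe_mul, ← EReal.coe_neg, EReal.exp_coe, hr, Real.exp_log ha]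
    _ ≤ _ := EReal.exp_monotone <| EReal.neg_le_neg_iff.2 <| mul_le_mul_of_nonneg_left
        (EReal.sub_le_sub le_rfl hD) (EReal.coe_nonneg.2 (div_nonneg (by linarith) (by linarith)))

lemma Fintype.sum_prod_mul_apply {X ι R : Type*} [Fintype X] [Fintype ι] [DecidableEq ι]
    [CommSemiring R] {p : X → R} (hp : ∑ x, p x = 1) (i : ι) (f : X → R) :
    ∑ c : ι → X, (∏ j, p (c j)) * f (c i) = ∑ x, p x * f x := by
  have h := Fintype.prod_sum fun j x => p x * if j = i then f x else 1
  rw [Fintype.prod_eq_single i fun j hj => by simp [hj, hp]] at h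
  simp only [Finset.prod_mul_distrib, Finset.prod_ite_eq', Finset.mem_univ, if_true] at h
  exact h.symm

section Codebook

variable {X Msg ι : Type*} [Fintype X] [DecidableEq X] [Fintype Msg] [DecidableEq Msg]
  (p : X → ℝ) (D : (Msg → X) → Msg → Matrix ι ι ℂ)

def decoderMass (x : X) : Matrix ι ι ℂ :=
  ∑ m, ∑ c : Msg → X, (if c m = x then ∏ j, p (c j) else 0) • D c m

/-- For `p x = 0` the inverse is `0`, and so is `decoderMass p D x`. -/
def testBlock (x : X) : Matrix ι ι ℂ :=
  ((Fintype.card Msg : ℝ) * p x)⁻¹ • decoderMass p D x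

variable {p D}

lemma sum_ite_prod_eq (hp1 : ∑ x, p x = 1) (m : Msg) (x : X) :
    ∑ c : Msg → X, (if c m = x then ∏ j, p (c j) else 0) = p x := by
  simpa [mul_ite] using Fintype.sum_prod_mul_apply hp1 m fun y => if y = x then (1 : ℝ) else 0

lemma decoderMass_eq_zero {x : X} (hx : p x = 0) : decoderMass p D x = 0 :=
  Finset.sum_eq_zero fun m _ => Finset.sum_eq_zero fun c _ => by
    split_ifs with h
    · rw [Finset.prod_eq_zero (Finset.mem_univ m) (h ▸ hx), zero_smul]
    · exact zero_smul _ _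

lemma posSemidef_decoderMass (hp : ∀ x, 0 ≤ p x) (hD : ∀ c m, (D c m).PosSemidef) (x : X) :
    (decoderMass p D x).PosSemidef :=
  posSemidef_sum _ fun m _ => posSemidef_sum _ fun c _ => (hD c m).smul <| by
    split_ifs
    · exact Finset.prod_nonneg fun j _ => hp _
    · exact le_rfl

lemma posSemidef_testBlock (hp : ∀ x, 0 ≤ p x) (hD : ∀ c m, (D c m).PosSemidef) (x : X) :
    (testBlock p D x).PosSemidef :=
  (posSemidef_decoderMass hp hD x).smul (inv_nonneg.2 (mul_nonneg (Nat.cast_nonneg _) (hp x)))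

lemma smul_testBlock (x : X) :
    p x • testBlock p D x = (Fintype.card Msg : ℝ)⁻¹ • decoderMass p D x := by
  rcases eq_or_ne (p x) 0 with hx | hx
  · simp [hx, decoderMass_eq_zero hx]
  · rw [testBlock, smul_smul, mul_inv, mul_left_comm, mul_inv_cancel₀ hx, mul_one]

variable [DecidableEq ι]

lemma posSemidef_smul_one_sub_decoderMass (hp : ∀ x, 0 ≤ p x) (hp1 : ∑ x, p x = 1)
    (hD : ∀ c m, (D c m).PosSemidef) (hDsum : ∀ c, ∑ m, D c m = 1) (x : X) :
    (((Fintype.card Msg : ℝ) * p x) • 1 - decoderMass p D x).PosSemidef := by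
  have : ((Fintype.card Msg : ℝ) * p x) • (1 : Matrix ι ι ℂ) - decoderMass p D x =
      ∑ m, ∑ c : Msg → X, (if c m = x then ∏ j, p (c j) else 0) • (1 - D c m) := by
    simp only [smul_sub, Finset.sum_sub_distrib, ← Finset.sum_smul, sum_ite_prod_eq hp1,
      decoderMass]
    simp
  rw [this]
  exact posSemidef_sum _ fun m _ => posSemidef_sum _ fun c _ =>
    (PosSemidef.one_sub_of_sum_eq_one (hD c) (hDsum c) m).smul <| by
      split_ifs
      · exact Finset.prod_nonneg fun j _ => hp _
      · exact le_rfl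

lemma posSemidef_one_sub_testBlock (hp : ∀ x, 0 ≤ p x) (hp1 : ∑ x, p x = 1)
    (hD : ∀ c m, (D c m).PosSemidef) (hDsum : ∀ c, ∑ m, D c m = 1) (x : X) :
    (1 - testBlock p D x).PosSemidef := by
  set t : ℝ := Fintype.card Msg * p x
  rcases eq_or_ne t 0 with ht | ht
  · simpa [testBlock, t, ht] using PosSemidef.one
  · have : 1 - testBlock p D x = t⁻¹ • (t • 1 - decoderMass p D x) := by
      rw [smul_sub, smul_smul, inv_mul_cancel₀ ht, one_smul, testBlock]
    rw [this]
    exact (posSemidef_smul_one_sub_decoderMass hp hp1 hD hDsum x).smul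
      (inv_nonneg.2 (mul_nonneg (Nat.cast_nonneg _) (hp x)))

variable [Fintype ι]

lemma trace_cqOperator_smul_mul_cqOperator_testBlock (A : X → Matrix ι ι ℂ) :
    (cqOperator (fun x => p x • A x) * cqOperator (testBlock p D)).trace =
      (Fintype.card Msg : ℝ)⁻¹ • ∑ m, ∑ c : Msg → X, (∏ j, p (c j)) • (A (c m) * D c m).trace := by
  calc (cqOperator (fun x => p x • A x) * cqOperator (testBlock p D)).trace
      = ∑ x, (Fintype.card Msg : ℝ)⁻¹ • (A x * decoderMass p D x).trace := by
        rw [trace_cqOperator_mul_cqOperator]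
        refine Finset.sum_congr rfl fun x _ => ?_
        rw [smul_mul_assoc, ← mul_smul_comm, smul_testBlock, mul_smul_comm, trace_smul]
    _ = _ := by
      rw [← Finset.smul_sum]
      congr 1
      simp only [decoderMass, Finset.mul_sum, trace_sum, mul_smul_comm]
      rw [Finset.sum_comm]
      refine Finset.sum_congr rfl fun m _ => ?_
      rw [Finset.sum_comm]
      simp [apply_ite trace]

lemma trace_diagonal_kronecker_mul_cqOperator_testBlock (hp1 : ∑ x, p x = 1)
    (hDsum : ∀ c, ∑ m, D c m = 1) (σ : Matrix ι ι ℂ) :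
    ((diagonal fun x => (p x : ℂ)) ⊗ₖ σ * cqOperator (testBlock p D)).trace =
      (Fintype.card Msg : ℝ)⁻¹ • σ.trace := by
  simp only [diagonal_kronecker_eq_cqOperator, Complex.coe_smul]
  rw [trace_cqOperator_smul_mul_cqOperator_testBlock fun _ => σ, Finset.sum_comm]
  simp only [← Finset.smul_sum, ← trace_sum, ← Finset.mul_sum, hDsum, mul_one, ← Finset.sum_smul]
  rw [← Fintype.prod_sum]
  simp [hp1]

end Codebook

theorem cq_one_shot_strong_converse_general
    {X : Type*} [Fintype X] [DecidableEq X]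
    {ι : Type*} [Fintype ι] [DecidableEq ι]
    (ρB : X → Matrix ι ι ℂ)
    (hρB : ∀ x, (ρB x).PosSemidef ∧ (ρB x).trace = 1)
    (p : X → ℝ) (hp : ∀ x, 0 ≤ p x) (hp1 : ∑ x, p x = 1)
    (M : ℕ)
    (D : (Fin M → X) → Fin M → Matrix ι ι ℂ)
    (hDpos : ∀ c m, (D c m).PosSemidef)
    (hDsum : ∀ c, ∑ m, D c m = 1)
    (P : ℝ)
    (hP : P = (M : ℝ)⁻¹ * ∑ m : Fin M, ∑ c : Fin M → X,
      (∏ m' : Fin M, p (c m')) * retr (ρB (c m) * D c m))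
    (ρXB : Matrix (X × ι) (X × ι) ℂ)
    (hρXB : ρXB = ∑ x, (p x) • (Matrix.single x x (1 : ℂ) ⊗ₖ ρB x))
    (α : ℝ) (hα : 1 < α) :
    ENNReal.ofReal P ≤
      EReal.exp (-((((α - 1) / α : ℝ) : EReal) *
        (((Real.log M : ℝ) : EReal) -
          ⨅ (σB : Matrix ι ι ℂ) (_ : σB.PosSemidef ∧ σB.trace = 1),
            measuredRenyiDiv α ρXB
              ((Matrix.diagonal fun x => ((p x : ℝ) : ℂ)) ⊗ₖ σB)))) := by
  rcases le_or_gt P 0 with hP0 | hPpos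
  · simp [ENNReal.ofReal_eq_zero.mpr hP0]
  have hM : (0 : ℝ) < M := by
    rcases Nat.eq_zero_or_pos M with rfl | hM
    · simp [hP] at hPpos
    · exact_mod_cast hM
  have hρXB' : ρXB = cqOperator fun x => p x • ρB x := by
    simp only [hρXB, cqOperator, kronecker_smul]
  have hρQ : retr (ρXB * cqOperator (testBlock p D)) = P := by
    rw [retr, hρXB', trace_cqOperator_smul_mul_cqOperator_testBlock, hP]
    simp only [Fintype.card_fin, Complex.smul_re, Complex.re_sum, smul_eq_mul, retr]
  refine ofReal_le_exp_of_log_rpow_mul_rpow_le hα hPpos hM (le_iInf₂ fun σ hσ => ?_)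
  have hρXB_pos : ρXB.PosSemidef := hρXB' ▸ PosSemidef.cqOperator fun x => (hρB x).1.smul (hp x)
  have hσX_pos : ((diagonal fun x => ((p x : ℝ) : ℂ)) ⊗ₖ σ).PosSemidef :=
    (PosSemidef.diagonal fun x => Complex.zero_le_real.2 (hp x)).kronecker hσ.1
  have hdiv := log_rpow_mul_rpow_le_measuredRenyiDiv hα hρXB_pos hσX_pos
    (PosSemidef.cqOperator (posSemidef_testBlock hp hDpos))
    (one_sub_cqOperator (testBlock p D) ▸
      PosSemidef.cqOperator (posSemidef_one_sub_testBlock hp hp1 hDpos hDsum))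
    (hρQ ▸ hPpos)
  rwa [hρQ, retr, trace_diagonal_kronecker_mul_cqOperator_testBlock hp1 hDsum, hσ.2,
    Fintype.card_fin, Complex.smul_re, Complex.one_re, smul_eq_mul, mul_one] at hdiv

/-- one-shot exponential strong converse for randomness-assisted
classical-quantum channel coding. A classical-quantum channel `x ↦ ρB x`, a shared
distribution `p` on the finite alphabet `X`, `M ≥ 1` equiprobable messages; the shared
randomness is a codebook `c : Fin M → X` drawn with the i.i.d. weight `∏ m, p (c m)`
(each codeword `x(m) ∼ p`), and for each realization `c` of the shared randomness the
decoder is a POVM `(D c m)_{m}`. The average success probability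
`P = (1/M) ∑_m 𝔼_{c} Tr[ρB (c m) * D c m]` satisfies, for every `α > 1`,
`P ≤ exp(-((α-1)/α)(log M - I_α^𝕄(X:B)))`, where
`I_α^𝕄(X:B) = inf_{σB} D_α^𝕄(ρ_{XB} ‖ ρ_X ⊗ σB)`. -/
theorem cq_one_shot_strong_converse
    {X : Type*} [Fintype X] [DecidableEq X]
    {ι : Type*} [Fintype ι] [DecidableEq ι]
    (ρB : X → Matrix ι ι ℂ)
    (hρB : ∀ x, (ρB x).PosSemidef ∧ (ρB x).trace = 1)
    (p : X → ℝ) (hp : ∀ x, 0 ≤ p x) (hp1 : ∑ x, p x = 1)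
    (M : ℕ) (hM : 1 ≤ M)
    (D : (Fin M → X) → Fin M → Matrix ι ι ℂ)
    (hDpos : ∀ c m, (D c m).PosSemidef)
    (hDsum : ∀ c, ∑ m, D c m = 1)
    (P : ℝ)
    (hP : P = (M : ℝ)⁻¹ * ∑ m : Fin M, ∑ c : Fin M → X,
      (∏ m' : Fin M, p (c m')) * retr (ρB (c m) * D c m))
    (ρXB : Matrix (X × ι) (X × ι) ℂ)
    (hρXB : ρXB = ∑ x, (p x) • (Matrix.single x x (1 : ℂ) ⊗ₖ ρB x))
    (α : ℝ) (hα : 1 < α) :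
    ENNReal.ofReal P ≤
      EReal.exp (-((((α - 1) / α : ℝ) : EReal) *
        (((Real.log M : ℝ) : EReal) -
          ⨅ (σB : Matrix ι ι ℂ) (_ : σB.PosSemidef ∧ σB.trace = 1),
            measuredRenyiDiv α ρXB
              ((Matrix.diagonal fun x => ((p x : ℝ) : ℂ)) ⊗ₖ σB)))) :=
  cq_one_shot_strong_converse_general ρB hρB p hp hp1 M D hDpos hDsum P hP ρXB hρXB α hα

end
end

section
/- Let ρ and σ be density operators on a finite-dimensional complex Hilbert space ℋ with supp(ρ) ⊆ supp(σ), let τ be a classical density operator on a finite-dimensional Hilbert space ℋ' (i.e., τ is diagonal in a fixed orthonormal basis of ℋ'), and let α ∈ (0,1) ∪ (1,∞). Then D_α^𝕄(τ ⊗ ρ ‖ τ ⊗ σ) = D_α^𝕄(ρ‖σ). -/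
open Matrix
open scoped ComplexOrder Kronecker

noncomputable section

/-!
The inequality `≥` holds because a POVM `P` on `ι` lifts to the POVM `1 ⊗ P` on `κ × ι` with the
same outcome distributions, as `Tr τ = 1`. For `≤`, the diagonal blocks `Q_j` of a POVM `Q` on
`κ × ι` are POVMs on `ι`, and since `τ = diag t` the outcome distributions of `τ ⊗ ρ`, `τ ⊗ σ`
under `Q` are the mixtures `∑ t_j p_j`, `∑ t_j q_j` of those of `ρ`, `σ` under `Q_j`. By Hölder's
inequality the Hellinger sum `∑ p^α q^(1-α)` is jointly concave for `α < 1` and jointly convex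
for `α > 1`, which makes `D_α` quasi-convex: the mixture's divergence is at most
`max_j D_α(p_j ‖ q_j)`.
-/

open Finset Real

theorem sum_rpow_mul_rpow_le_of_lt_one {ι : Type*} (s : Finset ι) {α : ℝ} (hα0 : 0 < α)
    (hα1 : α < 1) {a b : ι → ℝ} (ha : ∀ i ∈ s, 0 ≤ a i) (hb : ∀ i ∈ s, 0 ≤ b i) :
    ∑ i ∈ s, a i ^ α * b i ^ (1 - α) ≤ (∑ i ∈ s, a i) ^ α * (∑ i ∈ s, b i) ^ (1 - α) := by
  have h1α : 0 < 1 - α := sub_pos.2 hα1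
  have := inner_le_Lp_mul_Lq_of_nonneg s (HolderConjugate.inv_one_sub_inv hα0 hα1)
    (fun i hi => rpow_nonneg (ha i hi) α) (fun i hi => rpow_nonneg (hb i hi) (1 - α))
  simpa only [one_div, inv_inv, sum_congr rfl fun i hi => rpow_rpow_inv (ha i hi) hα0.ne',
    sum_congr rfl fun i hi => rpow_rpow_inv (hb i hi) h1α.ne'] using this

theorem le_sum_rpow_mul_rpow_of_one_lt {ι : Type*} (s : Finset ι) {α : ℝ} (hα : 1 < α)
    {a b : ι → ℝ} (ha : ∀ i, 0 ≤ a i) (hb : ∀ i, 0 ≤ b i) (hab : ∀ i ∈ s, b i = 0 → a i = 0) :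
    (∑ i ∈ s, a i) ^ α * (∑ i ∈ s, b i) ^ (1 - α) ≤ ∑ i ∈ s, a i ^ α * b i ^ (1 - α) := by
  have hα0 : 0 < α := by linarith
  have hw : ∀ i ∈ s, b i * (a i / b i) = a i := fun i hi => by
    rcases (hb i).eq_or_lt with h | h
    · simp [← h, hab i hi h.symm]
    · field_simp
  have hw' : ∀ i ∈ s, b i * (a i / b i) ^ α = a i ^ α * b i ^ (1 - α) := fun i hi => by
    rcases (hb i).eq_or_lt with h | h
    · simp [← h, hab i hi h.symm, zero_rpow hα0.ne']
    · rw [div_rpow (ha i) h.le, rpow_one_sub' h.le (by linarith)]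
      field_simp
  have H := inner_le_weight_mul_Lp_of_nonneg s hα.le b (fun i => a i / b i) hb
    (fun i => div_nonneg (ha i) (hb i))
  rw [sum_congr rfl hw, sum_congr rfl hw'] at H
  set A := ∑ i ∈ s, a i
  set B := ∑ i ∈ s, b i
  set S := ∑ i ∈ s, a i ^ α * b i ^ (1 - α)
  have hA : 0 ≤ A := sum_nonneg fun i _ => ha i
  have hS : 0 ≤ S := sum_nonneg fun i _ => mul_nonneg (rpow_nonneg (ha i) _) (rpow_nonneg (hb i) _)
  have hαinv : 1 - α⁻¹ ≠ 0 := by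
    rw [sub_ne_zero, ne_comm, inv_ne_one]; exact hα.ne'
  have hB : 0 ≤ B := sum_nonneg fun i _ => hb i
  rcases hB.eq_or_lt with hB | hB
  · rw [← hB, zero_rpow hαinv, zero_mul] at H
    rw [le_antisymm H hA, zero_rpow hα0.ne', zero_mul]
    exact hS
  · calc A ^ α * B ^ (1 - α) ≤ (B ^ (1 - α⁻¹) * S ^ α⁻¹) ^ α * B ^ (1 - α) := by gcongr
      _ = S := by
        rw [mul_rpow (by positivity) (by positivity), ← rpow_mul hB.le, ← rpow_mul hS,
          inv_mul_cancel₀ hα0.ne', rpow_one, mul_right_comm, ← rpow_add hB]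
        field_simp
        simp

theorem mul_rpow_mul_mul_rpow_one_sub {t a b : ℝ} (α : ℝ) (ht : 0 ≤ t) (ha : 0 ≤ a)
    (hb : 0 ≤ b) : (t * a) ^ α * (t * b) ^ (1 - α) = t * (a ^ α * b ^ (1 - α)) := by
  rw [mul_rpow ht ha, mul_rpow ht hb, mul_mul_mul_comm, ← rpow_add' ht (by simp),
    add_sub_cancel, rpow_one]

theorem exists_le_weighted_sum {κ : Type*} [Fintype κ] {t : κ → ℝ} (ht : ∀ j, 0 ≤ t j)
    (ht1 : ∑ j, t j = 1) (f : κ → ℝ) : ∃ j, f j ≤ ∑ j, t j * f j := by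
  obtain ⟨j, -, hj⟩ := univ.exists_min_image f (nonempty_of_sum_ne_zero (ht1 ▸ one_ne_zero))
  refine ⟨j, ?_⟩
  calc f j = ∑ i, t i * f j := by rw [← sum_mul, ht1, one_mul]
    _ ≤ ∑ i, t i * f i := by gcongr with i; exacts [ht i, hj i (mem_univ i)]

theorem exists_weighted_sum_le {κ : Type*} [Fintype κ] {t : κ → ℝ} (ht : ∀ j, 0 ≤ t j)
    (ht1 : ∑ j, t j = 1) (f : κ → ℝ) : ∃ j, ∑ j, t j * f j ≤ f j := by
  obtain ⟨j, hj⟩ := exists_le_weighted_sum ht ht1 (-f)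
  exact ⟨j, by simpa [sum_neg_distrib] using hj⟩

def hellingerSum {n : Type*} [Fintype n] (α : ℝ) (p q : n → ℝ) : ℝ :=
  ∑ i, p i ^ α * q i ^ (1 - α)

section hellingerSum

variable {n κ : Type*} [Fintype n] [Fintype κ] {α : ℝ}

theorem hellingerSum_pos {p q : n → ℝ} (hp : ∀ i, 0 ≤ p i) (hq : ∀ i, 0 ≤ q i)
    (hpq : ∀ i, q i = 0 → p i = 0) (hp0 : p ≠ 0) : 0 < hellingerSum α p q := by
  obtain ⟨i, hi⟩ := Function.ne_iff.1 hp0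
  have hpi : 0 < p i := (hp i).lt_of_ne' hi
  have hqi : 0 < q i := (hq i).lt_of_ne' fun h => hi (hpq i h)
  exact sum_pos' (fun j _ => mul_nonneg (rpow_nonneg (hp j) _) (rpow_nonneg (hq j) _))
    ⟨i, mem_univ i, mul_pos (rpow_pos_of_pos hpi _) (rpow_pos_of_pos hqi _)⟩

theorem sum_mul_hellingerSum_le_of_lt_one (hα0 : 0 < α) (hα1 : α < 1) {t : κ → ℝ}
    (ht : ∀ j, 0 ≤ t j) {p q : κ → n → ℝ} (hp : ∀ j i, 0 ≤ p j i) (hq : ∀ j i, 0 ≤ q j i) :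
    ∑ j, t j * hellingerSum α (p j) (q j) ≤
      hellingerSum α (∑ j, t j • p j) (∑ j, t j • q j) := by
  simp only [hellingerSum, mul_sum, Finset.sum_apply, Pi.smul_apply, smul_eq_mul]
  rw [sum_comm]
  gcongr with i
  simp only [← mul_rpow_mul_mul_rpow_one_sub α (ht _) (hp _ i) (hq _ i)]
  exact sum_rpow_mul_rpow_le_of_lt_one _ hα0 hα1 (fun j _ => mul_nonneg (ht j) (hp j i))
    (fun j _ => mul_nonneg (ht j) (hq j i))

theorem hellingerSum_le_sum_mul_of_one_lt (hα : 1 < α) {t : κ → ℝ}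
    (ht : ∀ j, 0 ≤ t j) {p q : κ → n → ℝ} (hp : ∀ j i, 0 ≤ p j i) (hq : ∀ j i, 0 ≤ q j i)
    (hpq : ∀ j i, q j i = 0 → p j i = 0) :
    hellingerSum α (∑ j, t j • p j) (∑ j, t j • q j) ≤
      ∑ j, t j * hellingerSum α (p j) (q j) := by
  simp only [hellingerSum, mul_sum, Finset.sum_apply, Pi.smul_apply, smul_eq_mul]
  rw [sum_comm]
  gcongr with i
  simp only [← mul_rpow_mul_mul_rpow_one_sub α (ht _) (hp _ i) (hq _ i)]
  refine le_sum_rpow_mul_rpow_of_one_lt _ hα (fun j => mul_nonneg (ht j) (hp j i))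
    (fun j => mul_nonneg (ht j) (hq j i)) fun j _ h => ?_
  rcases mul_eq_zero.1 h with h | h <;> simp [h, hpq j i]

end hellingerSum

theorem renyiDivE_eq_of_ac {α : ℝ} {k : ℕ} {p q : Fin k → ℝ} (hpq : ∀ i, q i = 0 → p i = 0) :
    renyiDivE α p q = ((α - 1)⁻¹ * log (hellingerSum α p q) : ℝ) := by
  rw [renyiDivE, if_pos (Or.inr hpq), hellingerSum]

theorem exists_renyiDivE_mixture_le {κ : Type*} [Fintype κ] {k : ℕ} {α : ℝ}
    (hα : (0 < α ∧ α < 1) ∨ 1 < α) {t : κ → ℝ} (ht : ∀ j, 0 ≤ t j) (ht1 : ∑ j, t j = 1)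
    {p q : κ → Fin k → ℝ} (hp : ∀ j i, 0 ≤ p j i) (hp1 : ∀ j, ∑ i, p j i = 1)
    (hq : ∀ j i, 0 ≤ q j i) (hpq : ∀ j i, q j i = 0 → p j i = 0) :
    ∃ j, renyiDivE α (∑ j, t j • p j) (∑ j, t j • q j) ≤ renyiDivE α (p j) (q j) := by
  set P := ∑ j, t j • p j
  set Q := ∑ j, t j • q j
  have hP : ∀ i, 0 ≤ P i := fun i => by
    simpa [P, Finset.sum_apply] using sum_nonneg fun j _ => mul_nonneg (ht j) (hp j i)
  have hP1 : ∑ i, P i = 1 := by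
    simp [P, Finset.sum_apply, sum_comm (γ := Fin k), ← mul_sum, hp1, ht1]
  have hQ : ∀ i, 0 ≤ Q i := fun i => by
    simpa [Q, Finset.sum_apply] using sum_nonneg fun j _ => mul_nonneg (ht j) (hq j i)
  have hPQ : ∀ i, Q i = 0 → P i = 0 := fun i h => by
    simp only [Q, P, Finset.sum_apply, Pi.smul_apply, smul_eq_mul] at h ⊢
    rw [sum_eq_zero_iff_of_nonneg fun j _ => mul_nonneg (ht j) (hq j i)] at h
    exact sum_eq_zero fun j hj => by
      rcases mul_eq_zero.1 (h j hj) with h | h <;> simp [h, hpq j i]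
  have hne : ∀ {r : Fin k → ℝ}, ∑ i, r i = 1 → r ≠ 0 := fun h h0 => by simp [h0] at h
  simp only [renyiDivE_eq_of_ac hPQ, renyiDivE_eq_of_ac (hpq _), EReal.coe_le_coe_iff]
  rcases hα with ⟨hα0, hα1⟩ | hα1
  · obtain ⟨j, hj⟩ := exists_le_weighted_sum ht ht1 fun j => hellingerSum α (p j) (q j)
    refine ⟨j, mul_le_mul_of_nonpos_left (log_le_log ?_ ?_) (inv_nonpos.2 (by linarith))⟩
    · exact hellingerSum_pos (hp j) (hq j) (hpq j) (hne (hp1 j))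
    · exact hj.trans (sum_mul_hellingerSum_le_of_lt_one hα0 hα1 ht hp hq)
  · obtain ⟨j, hj⟩ := exists_weighted_sum_le ht ht1 fun j => hellingerSum α (p j) (q j)
    refine ⟨j, mul_le_mul_of_nonneg_left (log_le_log ?_ ?_) (inv_nonneg.2 (by linarith))⟩
    · exact hellingerSum_pos hP hQ hPQ (hne hP1)
    · exact (hellingerSum_le_sum_mul_of_one_lt hα1 ht hp hq hpq).trans hj

namespace Matrix.PosSemidef

variable {ι : Type*} [Fintype ι] {ρ σ P : Matrix ι ι ℂ}

theorem exists_trace_mul_eq_sum_dotProduct (hP : P.PosSemidef) :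
    ∃ (m : ℕ) (v : Fin m → ι → ℂ),
      ∀ ρ : Matrix ι ι ℂ, (ρ * P).trace = ∑ r, star (v r) ⬝ᵥ ρ *ᵥ v r := by
  obtain ⟨m, v, rfl⟩ := posSemidef_iff_eq_sum_vecMulVec.1 hP
  exact ⟨m, v, fun ρ => by
    simp only [mul_sum, trace_sum, mul_vecMulVec, trace_vecMulVec, dotProduct_comm]⟩

theorem trace_mul_nonneg (hρ : ρ.PosSemidef) (hP : P.PosSemidef) : 0 ≤ (ρ * P).trace := by
  obtain ⟨m, v, hv⟩ := hP.exists_trace_mul_eq_sum_dotProduct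
  rw [hv]
  exact sum_nonneg fun r _ => hρ.dotProduct_mulVec_nonneg (v r)

theorem trace_mul_eq_zero_of_ker_le (hσ : σ.PosSemidef) (hP : P.PosSemidef)
    (hsupp : ∀ v : ι → ℂ, σ *ᵥ v = 0 → ρ *ᵥ v = 0) (h : (σ * P).trace = 0) :
    (ρ * P).trace = 0 := by
  obtain ⟨m, v, hv⟩ := hP.exists_trace_mul_eq_sum_dotProduct
  rw [hv, sum_eq_zero_iff_of_nonneg fun r _ => hσ.dotProduct_mulVec_nonneg (v r)] at h
  rw [hv]
  refine sum_eq_zero fun r hr => ?_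
  rw [hsupp _ ((hσ.dotProduct_mulVec_zero_iff _).1 (h r hr)), dotProduct_zero]

theorem retr_mul_nonneg (hρ : ρ.PosSemidef) (hP : P.PosSemidef) : 0 ≤ retr (ρ * P) :=
  (Complex.le_def.1 (hρ.trace_mul_nonneg hP)).1

theorem retr_mul_eq_zero_of_ker_le (hσ : σ.PosSemidef) (hP : P.PosSemidef)
    (hsupp : ∀ v : ι → ℂ, σ *ᵥ v = 0 → ρ *ᵥ v = 0) (h : retr (σ * P) = 0) :
    retr (ρ * P) = 0 := by
  have htr : (σ * P).trace = 0 := Complex.ext h (Complex.le_def.1 (hσ.trace_mul_nonneg hP)).2.symm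
  rw [retr, hσ.trace_mul_eq_zero_of_ker_le hP hsupp htr, Complex.zero_re]

end Matrix.PosSemidef

section POVM

variable {κ ι : Type*} {k : ℕ}

theorem sum_retr_mul [Fintype ι] [DecidableEq ι] {P : Fin k → Matrix ι ι ℂ}
    (hP1 : ∑ i, P i = 1) (ρ : Matrix ι ι ℂ) : ∑ i, retr (ρ * P i) = retr ρ := by
  simp only [retr, ← Complex.re_sum, ← trace_sum, ← mul_sum, hP1, mul_one]

theorem le_measuredRenyiDiv [Fintype ι] [DecidableEq ι] (α : ℝ) (ρ σ : Matrix ι ι ℂ)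
    {P : Fin k → Matrix ι ι ℂ} (hP : ∀ i, (P i).PosSemidef) (hP1 : ∑ i, P i = 1) :
    renyiDivE α (fun i => retr (ρ * P i)) (fun i => retr (σ * P i)) ≤ measuredRenyiDiv α ρ σ :=
  le_iSup₂_of_le k P (le_iSup₂_of_le hP hP1 le_rfl)

theorem measuredRenyiDiv_le [Fintype ι] [DecidableEq ι] {α : ℝ} {ρ σ : Matrix ι ι ℂ}
    {x : EReal} (h : ∀ (k : ℕ) (P : Fin k → Matrix ι ι ℂ), (∀ i, (P i).PosSemidef) →
      ∑ i, P i = 1 → renyiDivE α (fun i => retr (ρ * P i)) (fun i => retr (σ * P i)) ≤ x) :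
    measuredRenyiDiv α ρ σ ≤ x :=
  iSup₂_le fun k P => iSup₂_le (h k P)

theorem sum_submatrix_eq_one [DecidableEq ι] {m : Type*} [DecidableEq m]
    {Q : Fin k → Matrix m m ℂ} (hQ1 : ∑ i, Q i = 1) {e : ι → m} (he : Function.Injective e) :
    ∑ i, (Q i).submatrix e e = 1 := by
  have : ∑ i, (Q i).submatrix e e = (∑ i, Q i).submatrix e e := by
    ext; simp [Matrix.sum_apply]
  rw [this, hQ1, submatrix_one e he]

theorem sum_one_kronecker_eq_one [DecidableEq κ] [DecidableEq ι] {P : Fin k → Matrix ι ι ℂ}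
    (hP1 : ∑ i, P i = 1) : ∑ i, (1 : Matrix κ κ ℂ) ⊗ₖ P i = 1 := by
  have : ∑ i, (1 : Matrix κ κ ℂ) ⊗ₖ P i = 1 ⊗ₖ ∑ i, P i := by
    ext; simp [Matrix.sum_apply, mul_sum]
  rw [this, hP1, one_kronecker_one]

theorem retr_kronecker_mul_one_kronecker [Fintype κ] [Fintype ι] [DecidableEq κ]
    {τ : Matrix κ κ ℂ} (hτ : τ.trace = 1) (M P : Matrix ι ι ℂ) :
    retr (τ ⊗ₖ M * (1 : Matrix κ κ ℂ) ⊗ₖ P) = retr (M * P) := by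
  rw [retr, ← mul_kronecker_mul, mul_one, trace_kronecker, hτ, one_mul, retr]

theorem retr_diagonal_kronecker_mul [Fintype κ] [Fintype ι] [DecidableEq κ] (t : κ → ℝ)
    (M : Matrix ι ι ℂ) (Q : Matrix (κ × ι) (κ × ι) ℂ) :
    retr ((diagonal fun j => (t j : ℂ)) ⊗ₖ M * Q) =
      ∑ j, t j * retr (M * Q.submatrix (Prod.mk j) (Prod.mk j)) := by
  have key : ((diagonal fun j => (t j : ℂ)) ⊗ₖ M * Q).trace =
      ∑ j, (t j : ℂ) * (M * Q.submatrix (Prod.mk j) (Prod.mk j)).trace := by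
    simp only [trace, Matrix.diag, mul_apply, kronecker_apply, diagonal_apply, submatrix_apply,
      Fintype.sum_prod_type, ite_mul, zero_mul, mul_sum, sum_ite_irrel, sum_const_zero,
      sum_ite_eq, mem_univ, if_true, mul_assoc]
  simp only [retr, key, Complex.re_sum, Complex.re_ofReal_mul]

end POVM

theorem measured_renyi_tensor_classical_general
    {κ : Type*} [Fintype κ] [DecidableEq κ]
    {ι : Type*} [Fintype ι] [DecidableEq ι]
    (ρ σ : Matrix ι ι ℂ)
    (hρ : ρ.PosSemidef) (hρtr : ρ.trace = 1)
    (hσ : σ.PosSemidef)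
    (hsupp : ∀ v : ι → ℂ, σ.mulVec v = 0 → ρ.mulVec v = 0)
    (t : κ → ℝ) (ht : ∀ i, 0 ≤ t i) (ht1 : ∑ i, t i = 1)
    (τ : Matrix κ κ ℂ) (hτ : τ = Matrix.diagonal fun i => ((t i : ℝ) : ℂ))
    (α : ℝ) (hα : (0 < α ∧ α < 1) ∨ 1 < α) :
    measuredRenyiDiv α (τ ⊗ₖ ρ) (τ ⊗ₖ σ) = measuredRenyiDiv α ρ σ := by
  have hτtr : τ.trace = 1 := by
    rw [hτ, trace_diagonal, ← Complex.ofReal_sum, ht1, Complex.ofReal_one]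
  refine le_antisymm (measuredRenyiDiv_le fun k Q hQ hQ1 => ?_)
    (measuredRenyiDiv_le fun k P hP hP1 => ?_)
  · let B (j : κ) (i : Fin k) : Matrix ι ι ℂ := (Q i).submatrix (Prod.mk j) (Prod.mk j)
    have hB (j : κ) (i : Fin k) : (B j i).PosSemidef := (hQ i).submatrix _
    have hB1 (j : κ) : ∑ i, B j i = 1 := sum_submatrix_eq_one hQ1 (Prod.mk_right_injective j)
    obtain ⟨j, hj⟩ := exists_renyiDivE_mixture_le hα ht ht1
      (fun j i => hρ.retr_mul_nonneg (hB j i))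
      (fun j => by rw [sum_retr_mul (hB1 j), retr, hρtr, Complex.one_re])
      (fun j i => hσ.retr_mul_nonneg (hB j i))
      (fun j i => hσ.retr_mul_eq_zero_of_ker_le (hB j i) hsupp)
    convert hj.trans (le_measuredRenyiDiv α ρ σ (hB j) (hB1 j)) using 2 <;>
      ext i <;> simp [hτ, retr_diagonal_kronecker_mul, Finset.sum_apply, B]
  · simpa only [retr_kronecker_mul_one_kronecker hτtr] using
      le_measuredRenyiDiv α (τ ⊗ₖ ρ) (τ ⊗ₖ σ) (fun i => PosSemidef.one.kronecker (hP i))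
        (sum_one_kronecker_eq_one hP1)

/-- tensoring with a common classical state does not change the
measured Rényi divergence. For density operators `ρ, σ` with `supp ρ ⊆ supp σ`, a
classical (diagonal in the fixed basis) density operator `τ = diagonal t`, and
`α ∈ (0,1) ∪ (1,∞)`: `D_α^𝕄(τ ⊗ ρ ‖ τ ⊗ σ) = D_α^𝕄(ρ‖σ)`. -/
theorem measured_renyi_tensor_classical
    {κ : Type*} [Fintype κ] [DecidableEq κ]
    {ι : Type*} [Fintype ι] [DecidableEq ι]
    (ρ σ : Matrix ι ι ℂ)
    (hρ : ρ.PosSemidef) (hρtr : ρ.trace = 1)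
    (hσ : σ.PosSemidef) (hσtr : σ.trace = 1)
    (hsupp : ∀ v : ι → ℂ, σ.mulVec v = 0 → ρ.mulVec v = 0)
    (t : κ → ℝ) (ht : ∀ i, 0 ≤ t i) (ht1 : ∑ i, t i = 1)
    (τ : Matrix κ κ ℂ) (hτ : τ = Matrix.diagonal fun i => ((t i : ℝ) : ℂ))
    (α : ℝ) (hα : (0 < α ∧ α < 1) ∨ 1 < α) :
    measuredRenyiDiv α (τ ⊗ₖ ρ) (τ ⊗ₖ σ) = measuredRenyiDiv α ρ σ :=
  measured_renyi_tensor_classical_general ρ σ hρ hρtr hσ hsupp t ht ht1 τ hτ α hα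

end
end

section
/- Let ρ and σ be density operators on a finite-dimensional complex Hilbert space with supp(ρ) ⊆ supp(σ), let α > 1 with α' = α/(α−1), let (P(i))_i be a finite projection-valued measure (mutually orthogonal projections summing to 𝟙), let t(i) ≥ 0 be nonnegative reals, and set T := Σ_i t(i) P(i). If Tr[ρT] > 0, then the classical Rényi divergence of the induced outcome distributions p_{ρ,P}(i) = Tr[ρP(i)], q_{σ,P}(i) = Tr[σP(i)] satisfies D_α(p_{ρ,P} ‖ q_{σ,P}) ≥ α' log Tr[ρT] − log Tr[σ T^{α'}]. -/
/-!
Write `p i = Tr[ρ P i]`, `q i = Tr[σ P i]`. Then `Tr[ρ T] = ∑ t i p i` and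
`Tr[σ T^{α'}] = ∑ t i ^ α' q i`, and splitting `t i p i` as
`(p i q i ^ (-1/α')) · (t i q i ^ (1/α'))` Hölder's inequality gives
`Tr[ρ T] ≤ (∑ p i ^ α q i ^ (1-α)) ^ (1/α) · Tr[σ T^{α'}] ^ (1/α')`.
Taking `α' log` of both sides is the claim. Absolute continuity `q i = 0 → p i = 0`,
which the factorization needs, comes from `supp ρ ⊆ supp σ`: if `Tr[σ P] = 0` then the
positive semidefinite `P σ P` vanishes, so `σ` kills the range of `P`, hence so does `ρ`.
-/

open Matrix
open scoped ComplexOrder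

noncomputable section

open Real

namespace Matrix

variable {ι : Type*} [Fintype ι] {A P : Matrix ι ι ℂ}

lemma trace_mul_eq_trace_conjTranspose_mul_mul (hP : IsStarProjection P) :
    (A * P).trace = (Pᴴ * A * P).trace := by
  have hPh : Pᴴ = P := hP.isSelfAdjoint
  rw [trace_mul_cycle, hPh, hP.isIdempotentElem.eq, trace_mul_comm]

lemma PosSemidef.trace_mul_nonneg_s19 (hA : A.PosSemidef) (hP : IsStarProjection P) :
    0 ≤ (A * P).trace := by
  rw [trace_mul_eq_trace_conjTranspose_mul_mul hP]
  exact (hA.conjTranspose_mul_mul_same P).trace_nonneg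

lemma PosSemidef.mul_eq_zero_of_trace_mul_eq_zero (hA : A.PosSemidef) (hP : IsStarProjection P)
    (h : (A * P).trace = 0) : A * P = 0 := by
  rw [trace_mul_eq_trace_conjTranspose_mul_mul hP,
    (hA.conjTranspose_mul_mul_same P).trace_eq_zero_iff] at h
  refine ext_iff_mulVec.mpr fun v => ?_
  have hquad : star (P *ᵥ v) ⬝ᵥ (A *ᵥ (P *ᵥ v)) = 0 := by
    rw [star_mulVec, ← dotProduct_mulVec, mulVec_mulVec, mulVec_mulVec, h, zero_mulVec,
      dotProduct_zero]
  rw [zero_mulVec, ← mulVec_mulVec]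
  exact (dotProduct_mulVec_zero_iff hA _).mp hquad

end Matrix

section Trace

variable {ι : Type*} [Fintype ι]

lemma retr_mul_sum_smul {κ : Type*} [Fintype κ] (A : Matrix ι ι ℂ) (c : κ → ℝ)
    (P : κ → Matrix ι ι ℂ) :
    retr (A * ∑ i, c i • P i) = ∑ i, c i * retr (A * P i) := by
  simp [retr, Finset.mul_sum, Matrix.mul_smul, trace_sum, trace_smul]

variable {A P : Matrix ι ι ℂ}

lemma retr_mul_nonneg_s19 (hA : A.PosSemidef) (hP : IsStarProjection P) : 0 ≤ retr (A * P) :=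
  (Complex.nonneg_iff.mp (hA.trace_mul_nonneg_s19 hP)).1

lemma retr_mul_eq_zero_of_ker_subset {ρ σ : Matrix ι ι ℂ} (hσ : σ.PosSemidef)
    (hP : IsStarProjection P) (hker : ∀ v, σ *ᵥ v = 0 → ρ *ᵥ v = 0)
    (h : retr (σ * P) = 0) : retr (ρ * P) = 0 := by
  have htrace : (σ * P).trace = 0 :=
    Complex.ext h (Complex.nonneg_iff.mp (hσ.trace_mul_nonneg_s19 hP)).2.symm
  have hσP := hσ.mul_eq_zero_of_trace_mul_eq_zero hP htrace
  have hρP : ρ * P = 0 := ext_iff_mulVec.mpr fun v => by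
    rw [zero_mulVec, ← mulVec_mulVec]
    exact hker _ (by rw [mulVec_mulVec, hσP, zero_mulVec])
  simp [retr, hρP]

end Trace

section Holder

variable {α α' : ℝ}

lemma rpow_inv_mul_rpow_inv_eq_mul (hαα' : α.HolderConjugate α') {p q t : ℝ} (hp : 0 ≤ p)
    (hq : 0 < q) (ht : 0 ≤ t) :
    (p ^ α * q ^ (1 - α)) ^ α⁻¹ * (t ^ α' * q) ^ α'⁻¹ = t * p := by
  have hexp : (1 - α) * α⁻¹ + α'⁻¹ = 0 := by
    rw [sub_mul, one_mul, mul_inv_cancel₀ hαα'.ne_zero, hαα'.inv_sub_one, neg_add_cancel]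
  rw [mul_rpow (rpow_nonneg hp _) (rpow_nonneg hq.le _), mul_rpow (rpow_nonneg ht _) hq.le,
    rpow_rpow_inv hp hαα'.ne_zero, rpow_rpow_inv ht hαα'.symm.ne_zero, ← rpow_mul hq.le]
  calc p * q ^ ((1 - α) * α⁻¹) * (t * q ^ α'⁻¹)
      = t * p * q ^ ((1 - α) * α⁻¹ + α'⁻¹) := by rw [rpow_add hq]; ring
    _ = t * p := by rw [hexp, rpow_zero, mul_one]

variable {κ : Type*} [Fintype κ] {p q t : κ → ℝ}

theorem sum_mul_le_rpow_inv_mul_rpow_inv (hαα' : α.HolderConjugate α') (hp : ∀ i, 0 ≤ p i)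
    (hq : ∀ i, 0 ≤ q i) (ht : ∀ i, 0 ≤ t i) (hpq : ∀ i, q i = 0 → p i = 0) :
    ∑ i, t i * p i ≤
      (∑ i, p i ^ α * q i ^ (1 - α)) ^ α⁻¹ * (∑ i, t i ^ α' * q i) ^ α'⁻¹ := by
  have hpq₀ i : 0 ≤ p i ^ α * q i ^ (1 - α) :=
    mul_nonneg (rpow_nonneg (hp i) _) (rpow_nonneg (hq i) _)
  have htq₀ i : 0 ≤ t i ^ α' * q i := mul_nonneg (rpow_nonneg (ht i) _) (hq i)
  set f : κ → ℝ := fun i => (p i ^ α * q i ^ (1 - α)) ^ α⁻¹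
  set g : κ → ℝ := fun i => (t i ^ α' * q i) ^ α'⁻¹
  have hfg i : t i * p i = f i * g i := by
    rcases (hq i).eq_or_lt with hqi | hqi
    · simp [f, hpq i hqi.symm, zero_rpow hαα'.ne_zero, zero_rpow (inv_ne_zero hαα'.ne_zero)]
    · exact (rpow_inv_mul_rpow_inv_eq_mul hαα' (hp i) hqi (ht i)).symm
  have hf i : f i ^ α = p i ^ α * q i ^ (1 - α) := rpow_inv_rpow (hpq₀ i) hαα'.ne_zero
  have hg i : g i ^ α' = t i ^ α' * q i := rpow_inv_rpow (htq₀ i) hαα'.symm.ne_zero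
  calc ∑ i, t i * p i = ∑ i, f i * g i := Finset.sum_congr rfl fun i _ => hfg i
    _ ≤ (∑ i, f i ^ α) ^ (1 / α) * (∑ i, g i ^ α') ^ (1 / α') :=
      inner_le_Lp_mul_Lq_of_nonneg _ hαα' (fun i _ => rpow_nonneg (hpq₀ i) _)
        (fun i _ => rpow_nonneg (htq₀ i) _)
    _ = _ := by simp only [hf, hg, one_div]

theorem mul_log_sum_mul_sub_log_le (hαα' : α.HolderConjugate α') (hp : ∀ i, 0 ≤ p i)
    (hq : ∀ i, 0 ≤ q i) (ht : ∀ i, 0 ≤ t i) (hpq : ∀ i, q i = 0 → p i = 0)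
    (hpos : 0 < ∑ i, t i * p i) :
    α' * log (∑ i, t i * p i) - log (∑ i, t i ^ α' * q i) ≤
      (α - 1)⁻¹ * log (∑ i, p i ^ α * q i ^ (1 - α)) := by
  set S := ∑ i, p i ^ α * q i ^ (1 - α)
  set C := ∑ i, t i ^ α' * q i
  have holder : ∑ i, t i * p i ≤ S ^ α⁻¹ * C ^ α'⁻¹ :=
    sum_mul_le_rpow_inv_mul_rpow_inv hαα' hp hq ht hpq
  have hS : 0 < S := by
    refine (Finset.sum_nonneg fun i _ => ?_).lt_of_ne fun h => ?_
    · exact mul_nonneg (rpow_nonneg (hp i) _) (rpow_nonneg (hq i) _)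
    · rw [show S = 0 from h.symm, zero_rpow (inv_ne_zero hαα'.ne_zero), zero_mul] at holder
      linarith
  have hC : 0 < C := by
    refine (Finset.sum_nonneg fun i _ => ?_).lt_of_ne fun h => ?_
    · exact mul_nonneg (rpow_nonneg (ht i) _) (hq i)
    · rw [show C = 0 from h.symm, zero_rpow (inv_ne_zero hαα'.symm.ne_zero), mul_zero] at holder
      linarith
  have hlog : log (∑ i, t i * p i) ≤ α⁻¹ * log S + α'⁻¹ * log C := by
    have := log_le_log hpos holder
    rwa [log_mul (rpow_pos_of_pos hS _).ne' (rpow_pos_of_pos hC _).ne', log_rpow hS,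
      log_rpow hC] at this
  have hcoeff : α' * α⁻¹ = (α - 1)⁻¹ := by
    rw [hαα'.conjugate_eq]
    field_simp [hαα'.sub_one_ne_zero, hαα'.ne_zero]
  calc α' * log (∑ i, t i * p i) - log C
      ≤ α' * (α⁻¹ * log S + α'⁻¹ * log C) - log C := by gcongr; exact hαα'.symm.pos.le
    _ = (α - 1)⁻¹ * log S := by
        rw [mul_add, ← mul_assoc, ← mul_assoc, hcoeff, mul_inv_cancel₀ hαα'.symm.ne_zero]
        ring

end Holder

theorem classical_pvm_holder_bound_general
    {ι : Type*} [Fintype ι]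
    (ρ σ : Matrix ι ι ℂ)
    (hρ : ρ.PosSemidef)
    (hσ : σ.PosSemidef)
    (hsupp : ∀ v : ι → ℂ, σ.mulVec v = 0 → ρ.mulVec v = 0)
    (α : ℝ) (hα : 1 < α) (α' : ℝ) (hα' : α' = α / (α - 1))
    {k : ℕ} (P : Fin k → Matrix ι ι ℂ)
    (hProj : ∀ i, (P i).IsHermitian ∧ P i * P i = P i)
    (t : Fin k → ℝ) (ht : ∀ i, 0 ≤ t i)
    (T : Matrix ι ι ℂ) (hT : T = ∑ i, t i • P i)
    (hTρ : 0 < retr (ρ * T)) :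
    ((α' * Real.log (retr (ρ * T))
        - Real.log (retr (σ * ∑ i, (t i ^ α' : ℝ) • P i)) : ℝ) : EReal) ≤
      renyiDivE α (fun i => retr (ρ * P i)) (fun i => retr (σ * P i)) := by
  have hαα' : α.HolderConjugate α' := (holderConjugate_iff_eq_conjExponent hα).mpr hα'
  have hP i : IsStarProjection (P i) := ⟨(hProj i).2, (hProj i).1⟩
  have hpq i : retr (σ * P i) = 0 → retr (ρ * P i) = 0 :=
    retr_mul_eq_zero_of_ker_subset hσ (hP i) hsupp
  subst hT
  rw [renyiDivE, if_pos (Or.inr hpq), EReal.coe_le_coe_iff]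
  simp only [retr_mul_sum_smul] at hTρ ⊢
  exact mul_log_sum_mul_sub_log_le hαα' (fun i => retr_mul_nonneg_s19 hρ (hP i))
    (fun i => retr_mul_nonneg_s19 hσ (hP i)) ht hpq hTρ

/-- classical Hölder step on the outcome distributions of a PVM.
Let `(P i)` be a finite projection-valued measure (mutually orthogonal projections
summing to `𝟙`), `t i ≥ 0`, and `T = ∑ i, t i • P i`. If `Tr[ρT] > 0`, then for `α > 1`
with `α' = α/(α-1)`, the induced outcome distributions `p_{ρ,P}, q_{σ,P}` satisfy
`D_α(p_{ρ,P} ‖ q_{σ,P}) ≥ α' log Tr[ρT] - log Tr[σ T^{α'}]`, where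
`T^{α'} = ∑ i, (t i)^{α'} • P i` (functional calculus). -/
theorem classical_pvm_holder_bound
    {ι : Type*} [Fintype ι] [DecidableEq ι]
    (ρ σ : Matrix ι ι ℂ)
    (hρ : ρ.PosSemidef) (hρtr : ρ.trace = 1)
    (hσ : σ.PosSemidef) (hσtr : σ.trace = 1)
    (hsupp : ∀ v : ι → ℂ, σ.mulVec v = 0 → ρ.mulVec v = 0)
    (α : ℝ) (hα : 1 < α) (α' : ℝ) (hα' : α' = α / (α - 1))
    {k : ℕ} (P : Fin k → Matrix ι ι ℂ)
    (hProj : ∀ i, (P i).IsHermitian ∧ P i * P i = P i)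
    (hOrth : ∀ i j, i ≠ j → P i * P j = 0)
    (hSum : ∑ i, P i = 1)
    (t : Fin k → ℝ) (ht : ∀ i, 0 ≤ t i)
    (T : Matrix ι ι ℂ) (hT : T = ∑ i, t i • P i)
    (hTρ : 0 < retr (ρ * T)) :
    ((α' * Real.log (retr (ρ * T))
        - Real.log (retr (σ * ∑ i, (t i ^ α' : ℝ) • P i)) : ℝ) : EReal) ≤
      renyiDivE α (fun i => retr (ρ * P i)) (fun i => retr (σ * P i)) :=
  classical_pvm_holder_bound_general ρ σ hρ hσ hsupp α hα α' hα' P hProj t ht T hT hTρ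

end
end
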